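/- Let K^1 and K^2 be closed convex cones and let F be a nonempty face of K^1 ∩ K^2. Let F^1 and F^2 be the minimal faces of K^1 and K^2 respectively containing F. Then F = F^1 ∩ F^2 and F* = (F^1)* + (F^2)* (the sum being closed). -/

import Mathlib

open Pointwise

def IsClosedConvexCone {m : ℕ} (K : Set (EuclideanSpace ℝ (Fin m))) : Prop :=
  IsClosed K ∧ Convex ℝ K ∧ ∀ x ∈ K, ∀ t : ℝ, 0 ≤ t → t • x ∈ K

def IsFace {m : ℕ} (K F : Set (EuclideanSpace ℝ (Fin m))) : Prop :=
  F ⊆ K ∧ Convex ℝ F ∧ (∀ x ∈ F, ∀ t : ℝ, 0 ≤ t → t • x ∈ F) ∧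
    ∀ x ∈ K, ∀ y ∈ K, x + y ∈ F → x ∈ F ∧ y ∈ F

/-!
Every point `y` of the minimal face `F¹` can be completed inside `F¹` to a point `y + z` of `F`,
because `{y ∈ K¹ | x - y ∈ K¹ for some x ∈ F}` is a face of `K¹` containing `F`. Doing this in
both cones shows `F¹ ∩ F² ⊆ F`; it also shows that a `d ∈ (F¹)*` with `-d ∈ (F²)*`, which must
vanish on `F`, is orthogonal to `F¹ ∪ F²`. After projecting `(F¹)*` onto `span (F¹ ∪ F²)`, the
sum `(F¹)* + (F²)*` is therefore a sum of closed cones `C + B` with `C ∩ -B = 0`, which is closed.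
Faces of closed cones are closed, so the dual of `(F¹)* + (F²)*` is `F¹ ∩ F² = F`, and the
bipolar theorem gives `F* = (F¹)* + (F²)*`.
-/

open scoped RealInnerProductSpace

lemma Convex.add_mem_of_smul_mem {E : Type*} [AddCommGroup E] [Module ℝ E] {s : Set E}
    (hs : Convex ℝ s) (hcone : ∀ x ∈ s, ∀ t : ℝ, 0 ≤ t → t • x ∈ s) {x y : E}
    (hx : x ∈ s) (hy : y ∈ s) : x + y ∈ s := by
  have hmid := hs hx hy (by norm_num : (0 : ℝ) ≤ 1 / 2) (by norm_num : (0 : ℝ) ≤ 1 / 2)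
    (by norm_num)
  convert hcone _ hmid 2 zero_le_two using 1
  module

/-- `G` is the minimal face of `K` containing `F`. -/
def IsMinimalFace {m : ℕ} (K F G : Set (EuclideanSpace ℝ (Fin m))) : Prop :=
  IsFace K G ∧ F ⊆ G ∧ ∀ G', IsFace K G' → F ⊆ G' → G ⊆ G'

namespace IsFace

variable {m : ℕ} {K G : Set (EuclideanSpace ℝ (Fin m))}

lemma add_mem (hG : IsFace K G) {x y : EuclideanSpace ℝ (Fin m)} (hx : x ∈ G) (hy : y ∈ G) :
    x + y ∈ G :=
  hG.2.1.add_mem_of_smul_mem hG.2.2.1 hx hy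

lemma zero_mem (hG : IsFace K G) (hne : G.Nonempty) : 0 ∈ G := by
  obtain ⟨x, hx⟩ := hne
  simpa using hG.2.2.1 x hx 0 le_rfl

lemma exists_add_mem_of_mem_span (hG : IsFace K G) (hne : G.Nonempty)
    {y : EuclideanSpace ℝ (Fin m)} (hy : y ∈ Submodule.span ℝ G) : ∃ g ∈ G, y + g ∈ G := by
  induction hy using Submodule.span_induction with
  | mem x hx => exact ⟨x, hx, hG.add_mem hx hx⟩
  | zero =>
    obtain ⟨g, hg⟩ := hne
    exact ⟨g, hg, by simpa using hg⟩
  | add x y _ _ hx hy =>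
    obtain ⟨g, hg, hxg⟩ := hx
    obtain ⟨h, hh, hyh⟩ := hy
    refine ⟨g + h, hG.add_mem hg hh, ?_⟩
    convert hG.add_mem hxg hyh using 1
    abel
  | smul c x _ hx =>
    obtain ⟨g, hg, hxg⟩ := hx
    rcases le_total 0 c with hc | hc
    · exact ⟨c • g, hG.2.2.1 g hg c hc, by rw [← smul_add]; exact hG.2.2.1 _ hxg c hc⟩
    · refine ⟨(-c) • (x + g), hG.2.2.1 _ hxg (-c) (neg_nonneg.2 hc), ?_⟩
      convert hG.2.2.1 g hg (-c) (neg_nonneg.2 hc) using 1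
      module

lemma isClosed (hK : IsClosed K) (hG : IsFace K G) : IsClosed G := by
  rcases G.eq_empty_or_nonempty with rfl | hne
  · exact isClosed_empty
  -- A face `G` is cut out of `K` by its linear span, since `span G = G - G`.
  have hG_eq : G = K ∩ Submodule.span ℝ G := by
    refine subset_antisymm (fun x hx => ⟨hG.1 hx, Submodule.subset_span hx⟩) ?_
    rintro y ⟨hyK, hy⟩
    obtain ⟨g, hg, hyg⟩ := hG.exists_add_mem_of_mem_span hne hy
    exact (hG.2.2.2 y hyK g (hG.1 hg) hyg).1
  rw [hG_eq]
  exact hK.inter (Submodule.closed_of_finiteDimensional _)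

lemma innerDual_innerDual (hK : IsClosed K) (hG : IsFace K G) (hne : G.Nonempty) :
    (ProperCone.innerDual (ProperCone.innerDual G : Set (EuclideanSpace ℝ (Fin m))) :
      Set (EuclideanSpace ℝ (Fin m))) = G :=
  let C : ProperCone ℝ (EuclideanSpace ℝ (Fin m)) :=
    { carrier := G
      add_mem' := hG.add_mem
      zero_mem' := hG.zero_mem hne
      smul_mem' := fun c x hx => hG.2.2.1 x hx c c.2
      isClosed' := hG.isClosed hK }
  congrArg SetLike.coe (ProperCone.innerDual_innerDual C)

end IsFace

section MinimalFace

variable {m : ℕ} {K F G : Set (EuclideanSpace ℝ (Fin m))}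

lemma isFace_setOf_sub_mem (hKconv : Convex ℝ K)
    (hKcone : ∀ x ∈ K, ∀ t : ℝ, 0 ≤ t → t • x ∈ K) (hFconv : Convex ℝ F)
    (hFcone : ∀ x ∈ F, ∀ t : ℝ, 0 ≤ t → t • x ∈ F) :
    IsFace K {y | y ∈ K ∧ ∃ x ∈ F, x - y ∈ K} := by
  refine ⟨fun y hy => hy.1, ?_, ?_, ?_⟩
  · rintro y₁ ⟨hy₁, x₁, hx₁, hxy₁⟩ y₂ ⟨hy₂, x₂, hx₂, hxy₂⟩ a b ha hb hab
    refine ⟨hKconv hy₁ hy₂ ha hb hab, a • x₁ + b • x₂, hFconv hx₁ hx₂ ha hb hab, ?_⟩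
    convert hKconv hxy₁ hxy₂ ha hb hab using 1
    module
  · rintro y ⟨hy, x, hx, hxy⟩ t ht
    refine ⟨hKcone y hy t ht, t • x, hFcone x hx t ht, ?_⟩
    rw [← smul_sub]
    exact hKcone _ hxy t ht
  · rintro u hu v hv ⟨-, x, hx, hxuv⟩
    refine ⟨⟨hu, x, hx, ?_⟩, ⟨hv, x, hx, ?_⟩⟩
    · convert hKconv.add_mem_of_smul_mem hKcone hxuv hv using 1
      abel
    · convert hKconv.add_mem_of_smul_mem hKcone hxuv hu using 1
      abel

lemma IsMinimalFace.exists_add_mem (hKconv : Convex ℝ K)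
    (hKcone : ∀ x ∈ K, ∀ t : ℝ, 0 ≤ t → t • x ∈ K) (hFconv : Convex ℝ F)
    (hFcone : ∀ x ∈ F, ∀ t : ℝ, 0 ≤ t → t • x ∈ F) (hG : IsMinimalFace K F G)
    {y : EuclideanSpace ℝ (Fin m)} (hy : y ∈ G) : ∃ z ∈ G, y + z ∈ F := by
  obtain ⟨hGface, hFG, hGmin⟩ := hG
  have hFK : F ⊆ K := hFG.trans hGface.1
  obtain ⟨hyK, x, hx, hxy⟩ := hGmin _ (isFace_setOf_sub_mem hKconv hKcone hFconv hFcone)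
    (fun x hx => ⟨hFK hx, x, hx, by simpa using hKcone x (hFK hx) 0 le_rfl⟩) hy
  have hyx : y + (x - y) = x := add_sub_cancel y x
  exact ⟨x - y, (hGface.2.2.2 y hyK _ hxy (by rw [hyx]; exact hFG hx)).2, by rwa [hyx]⟩

lemma IsMinimalFace.inner_eq_zero (hKconv : Convex ℝ K)
    (hKcone : ∀ x ∈ K, ∀ t : ℝ, 0 ≤ t → t • x ∈ K) (hFconv : Convex ℝ F)
    (hFcone : ∀ x ∈ F, ∀ t : ℝ, 0 ≤ t → t • x ∈ F) (hG : IsMinimalFace K F G)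
    {d : EuclideanSpace ℝ (Fin m)} (hd : d ∈ ProperCone.innerDual G) (hdF : ∀ x ∈ F, ⟪x, d⟫ = 0)
    {y : EuclideanSpace ℝ (Fin m)} (hy : y ∈ G) : ⟪y, d⟫ = 0 := by
  obtain ⟨z, hz, hyz⟩ := hG.exists_add_mem hKconv hKcone hFconv hFcone hy
  have hsum := hdF _ hyz
  rw [inner_add_left] at hsum
  linarith [ProperCone.mem_innerDual.1 hd hy, ProperCone.mem_innerDual.1 hd hz]

end MinimalFace

section ClosedSum

variable {E : Type*} [NormedAddCommGroup E] [NormedSpace ℝ E] [FiniteDimensional ℝ E]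
  {C B : Set E}

lemma exists_pos_mul_norm_le_norm_add (hC : IsClosed C) (hB : IsClosed B)
    (hCcone : ∀ x ∈ C, ∀ t : ℝ, 0 ≤ t → t • x ∈ C) (hBcone : ∀ x ∈ B, ∀ t : ℝ, 0 ≤ t → t • x ∈ B)
    (hCB : ∀ x ∈ C, -x ∈ B → x = 0) :
    ∃ c > 0, ∀ a ∈ C, ∀ b ∈ B, c * ‖a‖ ≤ ‖a + b‖ := by
  have hS : IsCompact (Metric.sphere 0 1 ∩ C) := (isCompact_sphere 0 1).inter_right hC
  have hdisj : Disjoint (Metric.sphere 0 1 ∩ C) (-B) := by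
    refine Set.disjoint_left.2 fun a ⟨ha1, haC⟩ haB => ?_
    simp [hCB a haC haB] at ha1
  obtain ⟨r, hr, hrS⟩ := Metric.exists_pos_forall_lt_edist hS hB.neg hdisj
  refine ⟨r, hr, fun a ha b hb => ?_⟩
  rcases eq_or_ne a 0 with rfl | ha0
  · simp
  have hna : 0 < ‖a‖ := norm_pos_iff.2 ha0
  have hsep := hrS (‖a‖⁻¹ • a) ⟨by simp [norm_smul, hna.ne'], hCcone a ha _ (inv_nonneg.2 hna.le)⟩
    (-(‖a‖⁻¹ • b)) (by simpa using hBcone b hb _ (inv_nonneg.2 hna.le))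
  rw [edist_nndist, ENNReal.coe_lt_coe, ← NNReal.coe_lt_coe, coe_nndist, dist_eq_norm,
    sub_neg_eq_add, ← smul_add, norm_smul, norm_inv, norm_norm, lt_inv_mul_iff₀ hna] at hsep
  linarith

lemma isClosed_add_of_neg_mem_eq_zero (hC : IsClosed C) (hB : IsClosed B)
    (hCcone : ∀ x ∈ C, ∀ t : ℝ, 0 ≤ t → t • x ∈ C) (hBcone : ∀ x ∈ B, ∀ t : ℝ, 0 ≤ t → t • x ∈ B)
    (hCB : ∀ x ∈ C, -x ∈ B → x = 0) : IsClosed (C + B) := by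
  obtain ⟨c, hc, hest⟩ := exists_pos_mul_norm_le_norm_add hC hB hCcone hBcone hCB
  refine closure_subset_iff_isClosed.1 fun l hl => ?_
  -- Near `l`, only summands `a ∈ C` of norm at most `R` occur, and (compact) + (closed) is closed.
  set R := (‖l‖ + 1) / c
  have hcl : IsClosed ((C ∩ Metric.closedBall 0 R) + B) :=
    hB.add_left_of_isCompact ((isCompact_closedBall 0 R).inter_left hC)
  suffices l ∈ closure ((C ∩ Metric.closedBall 0 R) + B) from
    Set.add_subset_add_right Set.inter_subset_left (hcl.closure_subset this)
  rw [Metric.mem_closure_iff] at hl ⊢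
  intro ε hε
  obtain ⟨_, ⟨a, ha, b, hb, rfl⟩, hdist⟩ := hl (min ε 1) (by positivity)
  refine ⟨a + b, ⟨a, ⟨ha, ?_⟩, b, hb, rfl⟩, hdist.trans_le (min_le_left _ _)⟩
  rw [mem_closedBall_zero_iff, le_div_iff₀ hc]
  have hnear : ‖a + b‖ ≤ ‖l‖ + 1 := by
    have := norm_le_norm_add_norm_sub' (a + b) l
    rw [← dist_eq_norm, dist_comm] at this
    linarith [hdist.trans_le (min_le_right ε 1)]
  linarith [hest a ha b hb]

end ClosedSum

section InnerDual

open ProperCone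

variable {E : Type*} [NormedAddCommGroup E] [InnerProductSpace ℝ E] [FiniteDimensional ℝ E]

lemma ProperCone.coe_innerDual_add (C D : ProperCone ℝ E) :
    (innerDual ((C : Set E) + (D : Set E)) : Set E) =
      (innerDual (C : Set E) : Set E) ∩ (innerDual (D : Set E) : Set E) := by
  ext z
  simp only [SetLike.mem_coe, Set.mem_inter_iff, mem_innerDual]
  refine ⟨fun h => ⟨fun x hx => ?_, fun x hx => ?_⟩, ?_⟩
  · simpa using h (Set.add_mem_add hx D.zero_mem)
  · simpa using h (Set.add_mem_add C.zero_mem hx)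
  · rintro ⟨hC, hD⟩ _ ⟨x, hx, y, hy, rfl⟩
    rw [inner_add_left]
    exact add_nonneg (hC hx) (hD hy)

lemma ProperCone.innerDual_innerDual_add (C D : ProperCone ℝ E) (h : IsClosed ((C : Set E) + (D : Set E))) :
    (innerDual (innerDual ((C : Set E) + (D : Set E)) : Set E) : Set E) =
      (C : Set E) + (D : Set E) := by
  let P : ProperCone ℝ E :=
    { toSubmodule := C.toSubmodule ⊔ D.toSubmodule
      isClosed' := by simpa [Submodule.coe_sup] using h }
  have hP : (P : Set E) = (C : Set E) + (D : Set E) := Submodule.coe_sup _ _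
  rw [← hP]
  exact congrArg SetLike.coe (innerDual_innerDual P)

theorem isClosed_innerDual_add_innerDual {S T : Set E}
    (h : ∀ d ∈ innerDual S, -d ∈ innerDual T → ∀ x ∈ S ∪ T, ⟪x, d⟫ = 0) :
    IsClosed ((innerDual S : Set E) + (innerDual T : Set E)) := by
  set M := Submodule.span ℝ (S ∪ T)
  have hsum : (innerDual S : Set E) + (innerDual T : Set E) =
      ((innerDual S : Set E) ∩ M) + (innerDual T : Set E) := by
    refine subset_antisymm ?_ (Set.add_subset_add_right Set.inter_subset_left)
    rintro _ ⟨y, hy, z, hz, rfl⟩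
    -- Moving the component of `y` orthogonal to `S ∪ T` over to `z` keeps both in their duals.
    set r := y - M.starProjection y
    have hr : ∀ x ∈ S ∪ T, ⟪x, r⟫ = 0 := fun x hx =>
      (Submodule.mem_orthogonal _ _).1 (M.sub_starProjection_mem_orthogonal y) x
        (Submodule.subset_span hx)
    refine ⟨y - r, ⟨mem_innerDual.2 fun x hx => ?_, ?_⟩, z + r, mem_innerDual.2 fun x hx => ?_,
      sub_add_add_cancel y z r⟩
    · rw [inner_sub_right, hr x (.inl hx), sub_zero]
      exact hy hx
    · simp [r]
    · rw [inner_add_right, hr x (.inr hx), add_zero]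
      exact hz hx
  rw [hsum]
  refine isClosed_add_of_neg_mem_eq_zero
    ((innerDual S).isClosed.inter M.closed_of_finiteDimensional) (innerDual T).isClosed
    (fun x hx t ht => ⟨PointedCone.smul_mem _ ht hx.1, M.smul_mem t hx.2⟩)
    (fun x hx t ht => PointedCone.smul_mem _ ht hx) fun d ⟨hdS, hdM⟩ hdT => ?_
  have hMd : M ≤ (ℝ ∙ d)ᗮ := Submodule.span_le.2 fun x hx =>
    Submodule.mem_orthogonal_singleton_iff_inner_left.2 (h d hdS hdT x hx)
  exact inner_self_eq_zero.1 (Submodule.mem_orthogonal_singleton_iff_inner_left.1 (hMd hdM))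

end InnerDual

section Intersection

variable {m : ℕ} {K1 K2 F F1 F2 : Set (EuclideanSpace ℝ (Fin m))}

lemma eq_inter_of_isMinimalFace (hK1conv : Convex ℝ K1)
    (hK1cone : ∀ x ∈ K1, ∀ t : ℝ, 0 ≤ t → t • x ∈ K1) (hK2conv : Convex ℝ K2)
    (hK2cone : ∀ x ∈ K2, ∀ t : ℝ, 0 ≤ t → t • x ∈ K2) (hF : IsFace (K1 ∩ K2) F)
    (hF1 : IsMinimalFace K1 F F1) (hF2 : IsMinimalFace K2 F F2) : F = F1 ∩ F2 := by
  refine subset_antisymm (Set.subset_inter hF1.2.1 hF2.2.1) ?_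
  rintro y ⟨hy1, hy2⟩
  obtain ⟨z1, hz1, hyz1⟩ := hF1.exists_add_mem hK1conv hK1cone hF.2.1 hF.2.2.1 hy1
  obtain ⟨z2, hz2, hyz2⟩ := hF2.exists_add_mem hK2conv hK2cone hF.2.1 hF.2.2.1 hy2
  -- `w = z1 + (y + z2) = z2 + (y + z1)` lies in both cones, and `y + w ∈ F`.
  have hw1 : z1 + (y + z2) ∈ K1 :=
    hK1conv.add_mem_of_smul_mem hK1cone (hF1.1.1 hz1) (hF.1 hyz2).1
  have hw2 : z1 + (y + z2) ∈ K2 := by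
    convert hK2conv.add_mem_of_smul_mem hK2cone (hF2.1.1 hz2) (hF.1 hyz1).2 using 1
    abel
  have hyw : y + (z1 + (y + z2)) ∈ F := by
    convert hF.add_mem hyz1 hyz2 using 1
    abel
  exact (hF.2.2.2 y ⟨hF1.1.1 hy1, hF2.1.1 hy2⟩ _ ⟨hw1, hw2⟩ hyw).1

lemma inner_eq_zero_of_mem_innerDual_of_neg_mem_innerDual (hK1conv : Convex ℝ K1)
    (hK1cone : ∀ x ∈ K1, ∀ t : ℝ, 0 ≤ t → t • x ∈ K1) (hK2conv : Convex ℝ K2)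
    (hK2cone : ∀ x ∈ K2, ∀ t : ℝ, 0 ≤ t → t • x ∈ K2) (hF : IsFace (K1 ∩ K2) F)
    (hF1 : IsMinimalFace K1 F F1) (hF2 : IsMinimalFace K2 F F2) {d : EuclideanSpace ℝ (Fin m)}
    (hd1 : d ∈ ProperCone.innerDual F1) (hd2 : -d ∈ ProperCone.innerDual F2) :
    ∀ x ∈ F1 ∪ F2, ⟪x, d⟫ = 0 := by
  have hdF : ∀ x ∈ F, ⟪x, d⟫ = 0 := fun x hx =>
    le_antisymm (by simpa using ProperCone.mem_innerDual.1 hd2 (hF2.2.1 hx))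
      (ProperCone.mem_innerDual.1 hd1 (hF1.2.1 hx))
  rintro x (hx | hx)
  · exact hF1.inner_eq_zero hK1conv hK1cone hF.2.1 hF.2.2.1 hd1 hdF hx
  · simpa using hF2.inner_eq_zero hK2conv hK2cone hF.2.1 hF.2.2.1 hd2
      (fun x hx => by simp [hdF x hx]) hx

end Intersection

/-- If `F` is a nonempty face of `K¹ ∩ K²` and `F¹`, `F²` are the minimal faces of
`K¹`, `K²` containing `F`, then `F = F¹ ∩ F²` and `F* = (F¹)* + (F²)*`. -/
theorem stmt5 {n : ℕ} (K1 K2 F F1 F2 : Set (EuclideanSpace ℝ (Fin n)))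
    (hK1 : IsClosedConvexCone K1) (hK2 : IsClosedConvexCone K2)
    (hF : IsFace (K1 ∩ K2) F) (hFne : F.Nonempty)
    (hF1 : IsFace K1 F1) (hFF1 : F ⊆ F1)
    (hF1min : ∀ G, IsFace K1 G → F ⊆ G → F1 ⊆ G)
    (hF2 : IsFace K2 F2) (hFF2 : F ⊆ F2)
    (hF2min : ∀ G, IsFace K2 G → F ⊆ G → F2 ⊆ G) :
    F = F1 ∩ F2 ∧
      (ProperCone.innerDual F : Set (EuclideanSpace ℝ (Fin n))) =
        (ProperCone.innerDual F1 : Set (EuclideanSpace ℝ (Fin n))) +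
          (ProperCone.innerDual F2 : Set (EuclideanSpace ℝ (Fin n))) := by
  have hF1' : IsMinimalFace K1 F F1 := ⟨hF1, hFF1, hF1min⟩
  have hF2' : IsMinimalFace K2 F F2 := ⟨hF2, hFF2, hF2min⟩
  have hFeq : F = F1 ∩ F2 :=
    eq_inter_of_isMinimalFace hK1.2.1 hK1.2.2 hK2.2.1 hK2.2.2 hF hF1' hF2'
  refine ⟨hFeq, ?_⟩
  have hclosed := isClosed_innerDual_add_innerDual fun d hd1 hd2 =>
    inner_eq_zero_of_mem_innerDual_of_neg_mem_innerDual hK1.2.1 hK1.2.2 hK2.2.1 hK2.2.2 hF hF1'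
      hF2' hd1 hd2
  have hdual : (ProperCone.innerDual ((ProperCone.innerDual F1 : Set (EuclideanSpace ℝ (Fin n))) +
      (ProperCone.innerDual F2 : Set (EuclideanSpace ℝ (Fin n)))) :
        Set (EuclideanSpace ℝ (Fin n))) = F := by
    rw [ProperCone.coe_innerDual_add, hF1.innerDual_innerDual hK1.1 (hFne.mono hFF1),
      hF2.innerDual_innerDual hK2.1 (hFne.mono hFF2), hFeq]
  rw [← ProperCone.innerDual_innerDual_add _ _ hclosed, hdual]
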